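/- arXiv:2307.08438 — 4 statements merged into one kernel-verified Lean document; each statement's English description precedes it below -/
import Mathlib

section
/- Assume the Scalar parameter conditions and additionally t ≥ 1. Let x₁, x₂ be independent standard Gaussian random variables and let E denote the event {−t̂ ≤ x₁ ≤ −t̂ + γ̂}. Then E[x₂·1{E and x₂·sin θ ≤ −t − x₁·cos θ}] ≤ −(2/(3√(2π)))·Pr[E]. -/
open MeasureTheory ProbabilityTheory Real

section BandAux

open Set Filter Topology
open scoped ENNReal NNReal
set_option maxHeartbeats 4000000

private lemma band_integral_Iic_mul_exp (a : ℝ) :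
    ∫ y in Iic a, y * Real.exp (-y ^ 2 / 2) = -Real.exp (-a ^ 2 / 2) := by
  have hderiv : ∀ y ∈ Iic a, HasDerivAt (fun y : ℝ => -Real.exp (-y ^ 2 / 2))
      (y * Real.exp (-y ^ 2 / 2)) y := by
    intro y _
    have h1 : HasDerivAt (fun y : ℝ => -y ^ 2 / 2) (-y) y := by
      have := ((hasDerivAt_pow 2 y).neg).div_const 2
      simpa using this.congr_deriv (by ring)
    have h2 := (h1.exp).neg
    exact h2.congr_deriv (by ring)
  have hint : IntegrableOn (fun y : ℝ => y * Real.exp (-y ^ 2 / 2)) (Iic a) := by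
    have h := integrable_mul_exp_neg_mul_sq (b := 1/2) (by norm_num)
    have h' : (fun x : ℝ => x * Real.exp (-(1/2) * x ^ 2))
        = fun y : ℝ => y * Real.exp (-y ^ 2 / 2) := by
      funext x; ring_nf
    rw [h'] at h
    exact h.integrableOn
  have htend : Tendsto (fun y : ℝ => -Real.exp (-y ^ 2 / 2)) atBot (𝓝 0) := by
    have h1 : Tendsto (fun y : ℝ => y ^ 2) atBot atTop := by
      have := (tendsto_pow_atTop (α := ℝ) (n := 2) two_ne_zero).comp tendsto_neg_atBot_atTop
      apply this.congr; intro y; simp [neg_pow]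
    have h2 : Tendsto (fun y : ℝ => -y ^ 2 / 2) atBot atBot := by
      have := tendsto_neg_atTop_atBot.comp (h1.atTop_div_const (by norm_num : (0:ℝ) < 2))
      apply this.congr; intro y; simp [Function.comp]; ring
    have h3 := (Real.tendsto_exp_atBot.comp h2).neg
    simpa using h3
  have := integral_Iic_of_hasDerivAt_of_tendsto' hderiv hint htend
  simpa using this

private lemma band_integral_Iic_id_gaussian (a : ℝ) :
    ∫ y in Iic a, y ∂(gaussianReal 0 1)
      = -((Real.sqrt (2 * π))⁻¹ * Real.exp (-a ^ 2 / 2)) := by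
  rw [gaussianReal_of_var_ne_zero 0 one_ne_zero]
  have hmeq : volume.withDensity (gaussianPDF 0 1)
      = volume.withDensity (fun x => ((gaussianPDFReal 0 1 x).toNNReal : ℝ≥0∞)) := rfl
  rw [hmeq, setIntegral_withDensity_eq_setIntegral_smul
    (measurable_gaussianPDFReal 0 1).real_toNNReal _ measurableSet_Iic]
  have hpt : ∀ y : ℝ, (gaussianPDFReal 0 1 y).toNNReal • y
      = (Real.sqrt (2 * π))⁻¹ * (y * Real.exp (-y ^ 2 / 2)) := by
    intro y
    rw [NNReal.smul_def, Real.coe_toNNReal _ (gaussianPDFReal_nonneg 0 1 y)]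
    simp only [gaussianPDFReal, NNReal.coe_one, mul_one, sub_zero]
    rw [smul_eq_mul]
    ring
  simp_rw [hpt]
  rw [integral_const_mul, band_integral_Iic_mul_exp]
  ring

private lemma band_integrable_id_gaussian :
    Integrable (fun x : ℝ => x) (gaussianReal 0 1) := by
  rw [gaussianReal_of_var_ne_zero 0 one_ne_zero]
  rw [integrable_withDensity_iff (measurable_gaussianPDF 0 1)
    (ae_of_all _ fun x => ENNReal.ofReal_lt_top)]
  have h : Integrable (fun x : ℝ => (Real.sqrt (2 * π))⁻¹ * (x * Real.exp (-(1/2) * x ^ 2))) :=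
    (integrable_mul_exp_neg_mul_sq (by norm_num)).const_mul _
  apply h.congr (ae_of_all _ fun x => ?_)
  show (Real.sqrt (2 * π))⁻¹ * (x * Real.exp (-(1/2) * x ^ 2)) = x * (gaussianPDF 0 1 x).toReal
  have e1 : -(1/2 : ℝ) * x ^ 2 = -x ^ 2 / 2 := by ring
  rw [e1, gaussianPDF, ENNReal.toReal_ofReal (gaussianPDFReal_nonneg 0 1 x)]
  simp only [gaussianPDFReal, NNReal.coe_one, mul_one, sub_zero]
  ring

private lemma band_scalar_bound
    (t th ε' gh θ : ℝ) (hε' : ε' ∈ Set.Ioo (0 : ℝ) 1)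
    (ht1 : t ≤ Real.sqrt (2 * Real.log (1 / ε')))
    (hθ : θ ∈ Set.Icc (0 : ℝ) (π / 2))
    (hθl : ε' * Real.exp (t ^ 2 / 2) ≤ θ)
    (hθt : 0 < t → θ ≤ 1 / (5 * t))
    (hth : |th - t| ≤ ε' ^ 2 / 8)
    (hgh : gh = (1 / 2) * ε' * Real.exp (th ^ 2 / 2))
    (ht : 1 ≤ t) :
    0 < Real.sin θ ∧ ∀ x : ℝ, -th ≤ x → x ≤ -th + gh →
      |(-t - x * Real.cos θ)| ≤ 3/4 * Real.sin θ := by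
  obtain ⟨hε0, hε1⟩ := hε'
  have ht0 : (0:ℝ) < t := by linarith
  have hE2 : (3/2 : ℝ) ≤ Real.exp (t ^ 2 / 2) := by
    have h1 : Real.exp (1/2 : ℝ) ≤ Real.exp (t ^ 2 / 2) :=
      Real.exp_le_exp.mpr (by nlinarith)
    nlinarith [Real.add_one_le_exp (1/2 : ℝ)]
  have hθpos : 0 < θ := lt_of_lt_of_le (by positivity) hθl
  have hθ5t := hθt ht0
  have ht5 : θ ≤ 1/5 := by
    refine le_trans hθ5t ?_
    rw [div_le_div_iff₀ (by linarith) (by norm_num)]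
    linarith
  have htθ : t * θ ≤ 1/5 := by
    have h := mul_le_mul_of_nonneg_left hθ5t (le_of_lt ht0)
    calc t * θ ≤ t * (1 / (5 * t)) := h
      _ = 1/5 := by field_simp
  have hsin : 99/100 * θ ≤ Real.sin θ := by
    have h := Real.sin_gt_sub_cube hθpos
    nlinarith [hθpos.le, ht5,
      mul_le_mul_of_nonneg_left (mul_le_mul ht5 ht5 hθpos.le (by norm_num)) hθpos.le]
  have hsinpos : 0 < Real.sin θ := lt_of_lt_of_le (by positivity) hsin
  have hcos1 : Real.cos θ ≤ 1 := Real.cos_le_one θ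
  have hcos0 : 0 ≤ Real.cos θ := Real.cos_nonneg_of_mem_Icc
    ⟨by linarith [hθ.1, Real.pi_pos], hθ.2⟩
  have hcos2 : 1 - θ ^ 2 / 2 ≤ Real.cos θ := Real.one_sub_sq_div_two_le_cos
  obtain ⟨hth1, hth2⟩ := abs_le.mp hth
  have hε1' : ε' ≤ 1 := le_of_lt hε1
  have hthlb : t - ε' ^ 2 / 8 ≤ th := by linarith
  have hthub : th ≤ t + ε' ^ 2 / 8 := by linarith
  have hthpos : (0:ℝ) ≤ th := by nlinarith
  -- key : ε'^2 * t ≤ 43/100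
  have hL : (0:ℝ) < Real.log (1/ε') := Real.log_pos ((one_lt_div hε0).mpr hε1)
  have ht2 : t ^ 2 ≤ 2 * Real.log (1/ε') := by
    have hs := Real.sq_sqrt (le_of_lt (by positivity : (0:ℝ) < 2 * Real.log (1/ε')))
    nlinarith [Real.sqrt_nonneg (2 * Real.log (1/ε'))]
  have hεL : ε' = Real.exp (-(Real.log (1/ε'))) := by
    have h : Real.log (1/ε') = -Real.log ε' := by rw [one_div, Real.log_inv]
    rw [h, neg_neg, Real.exp_log hε0]
  set L := Real.log (1/ε') with hLdef
  have hexp : 4 * L * Real.exp 1 ≤ Real.exp (4 * L) := by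
    have h := Real.add_one_le_exp (4 * L - 1)
    rw [Real.exp_sub] at h
    have h2 : 4 * L ≤ Real.exp (4 * L) / Real.exp 1 := by linarith
    rwa [le_div_iff₀ (Real.exp_pos 1)] at h2
  have hε4 : ε' ^ 4 = (Real.exp (4 * L))⁻¹ := by
    rw [hεL, ← Real.exp_nat_mul, ← Real.exp_neg]
    congr 1
    push_cast
    ring
  have he1 : (2.7182818283 : ℝ) < Real.exp 1 := Real.exp_one_gt_d9
  have hC : (ε' ^ 2 * t) ^ 2 ≤ 1 / (2 * Real.exp 1) := by
    have h1 : (ε' ^ 2 * t) ^ 2 = ε' ^ 4 * t ^ 2 := by ring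
    rw [h1, hε4, inv_mul_eq_div, div_le_div_iff₀ (Real.exp_pos _) (by positivity)]
    nlinarith [mul_le_mul_of_nonneg_right ht2 (Real.exp_pos 1).le, hexp]
  have hCC : 1 / (2 * Real.exp 1) ≤ (1849:ℝ)/10000 := by
    rw [div_le_div_iff₀ (by positivity) (by norm_num)]
    nlinarith
  have key : ε' ^ 2 * t ≤ 43/100 := by
    have hnn : (0:ℝ) ≤ ε' ^ 2 * t := by positivity
    nlinarith
  -- gh ≤ (8/15) θ
  have hD : th ^ 2 / 2 - t ^ 2 / 2 ≤ 1/16 := by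
    have hth2sq : th ^ 2 ≤ (t + ε' ^ 2 / 8) ^ 2 := pow_le_pow_left₀ hthpos hthub 2
    have hε4le : ε' ^ 4 ≤ 1 := by nlinarith
    nlinarith [hth2sq, key, hε4le]
  have h2 : Real.exp (1/16 : ℝ) ≤ 16/15 := by
    have h := Real.add_one_le_exp (-(1/16) : ℝ)
    rw [Real.exp_neg] at h
    have hp := Real.exp_pos (1/16 : ℝ)
    have hc : Real.exp (1/16 : ℝ) * (Real.exp (1/16 : ℝ))⁻¹ = 1 :=
      mul_inv_cancel₀ (ne_of_gt hp)
    nlinarith [mul_le_mul_of_nonneg_left h hp.le]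
  have h1 : Real.exp (th ^ 2 / 2) ≤ Real.exp (t ^ 2 / 2) * Real.exp (1/16 : ℝ) := by
    rw [← Real.exp_add]
    exact Real.exp_le_exp.mpr (by linarith)
  have hghb : gh ≤ 8/15 * θ := by
    rw [hgh]
    have hEp := Real.exp_pos (t ^ 2 / 2)
    have hEp2 := Real.exp_pos (th ^ 2 / 2)
    nlinarith [mul_le_mul_of_nonneg_left h1 hε0.le,
      mul_le_mul_of_nonneg_left h2 (mul_pos hε0 hEp).le]
  have hgh0 : 0 < gh := by rw [hgh]; positivity
  clear_value L
  clear hC hCC hexp hε4 he1 key ht2 hεL hL hLdef ht1 L hD h1 h2 hth hθt hθ hgh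
  refine ⟨hsinpos, fun x hx1 hx2 => ?_⟩
  have hεθ : ε' ≤ 2/3 * θ := by
    have := mul_le_mul_of_nonneg_left hE2 hε0.le
    nlinarith [hθl]
  have hmain : ε' ^ 2 / 8 + th * θ ^ 2 / 2 + gh ≤ 3/4 * Real.sin θ := by
    have a1 : ε' ^ 2 / 8 ≤ θ / 12 := by nlinarith [hεθ, hε0.le, hε1']
    have a2a : th * θ ≤ 9/40 := by
      have hb1 : th * θ ≤ (t + ε' ^ 2 / 8) * θ :=
        mul_le_mul_of_nonneg_right hthub hθpos.le
      have hb2 : (0:ℝ) ≤ (1 - ε' ^ 2) * θ :=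
        mul_nonneg (by nlinarith) hθpos.le
      nlinarith [htθ, ht5]
    have a2 : th * θ ^ 2 / 2 ≤ 9/80 * θ := by
      nlinarith [mul_le_mul_of_nonneg_right a2a hθpos.le]
    linarith [hghb, hsin]
  rw [abs_le]
  constructor
  · -- lower bound
    have hxc : (th - gh) * Real.cos θ ≤ -x * Real.cos θ :=
      mul_le_mul_of_nonneg_right (by linarith) hcos0
    have hcc : th * Real.cos θ ≥ th * (1 - θ ^ 2 / 2) :=
      mul_le_mul_of_nonneg_left hcos2 hthpos
    nlinarith [mul_le_mul_of_nonneg_left hcos1 hgh0.le]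
  · -- upper bound
    have hxc : -x * Real.cos θ ≤ th * Real.cos θ :=
      mul_le_mul_of_nonneg_right (by linarith) hcos0
    nlinarith [mul_le_mul_of_nonneg_left hcos1 hthpos]

end BandAux

/-- Under the scalar parameter conditions, if additionally `t ≥ 1`,
then for independent standard Gaussians `x₁, x₂` and the event
`E = {−t̂ ≤ x₁ ≤ −t̂ + γ̂}`,
`E[x₂·1{E and x₂ sin θ ≤ −t − x₁ cos θ}] ≤ −(2/(3√(2π)))·Pr[E]`. -/
theorem band_expectation_bound_large_t
    (t th ε' gh θ : ℝ) (hε' : ε' ∈ Set.Ioo (0 : ℝ) 1)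
    (ht0 : 0 ≤ t) (ht1 : t ≤ Real.sqrt (2 * Real.log (1 / ε')))
    (hθ : θ ∈ Set.Icc (0 : ℝ) (π / 2))
    (hθl : ε' * Real.exp (t ^ 2 / 2) ≤ θ)
    (hθt : 0 < t → θ ≤ 1 / (5 * t))
    (hth : |th - t| ≤ ε' ^ 2 / 8)
    (hgh : gh = (1 / 2) * ε' * Real.exp (th ^ 2 / 2))
    (ht : 1 ≤ t) :
    (∫ p in {p : ℝ × ℝ | (-th ≤ p.1 ∧ p.1 ≤ -th + gh) ∧
        p.2 * Real.sin θ ≤ -t - p.1 * Real.cos θ}, p.2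
        ∂((gaussianReal 0 1).prod (gaussianReal 0 1)))
      ≤ -(2 / (3 * Real.sqrt (2 * π))) *
        (((gaussianReal 0 1).prod (gaussianReal 0 1))
          {p : ℝ × ℝ | -th ≤ p.1 ∧ p.1 ≤ -th + gh}).toReal := by
  obtain ⟨hsinpos, hbound⟩ :=
    band_scalar_bound t th ε' gh θ hε' ht1 hθ hθl hθt hth hgh ht
  set μ := gaussianReal 0 1 with hμ
  set S : Set (ℝ × ℝ) := {p : ℝ × ℝ | (-th ≤ p.1 ∧ p.1 ≤ -th + gh) ∧
      p.2 * Real.sin θ ≤ -t - p.1 * Real.cos θ} with hSdef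
  have hS : MeasurableSet S := by
    apply MeasurableSet.inter
    · exact ((measurableSet_le measurable_const measurable_fst).inter
        (measurableSet_le measurable_fst measurable_const))
    · exact measurableSet_le (measurable_snd.mul_const _)
        (measurable_const.sub (measurable_fst.mul_const _))
  have hInt2 : Integrable (fun p : ℝ × ℝ => p.2) (μ.prod μ) := by
    have hmap : Measure.map Prod.snd (μ.prod μ) = μ := by
      rw [Measure.map_snd_prod]; simp
    have h : Integrable (fun x : ℝ => x) (Measure.map Prod.snd (μ.prod μ)) := by
      rw [hmap]
      exact band_integrable_id_gaussian
    exact h.comp_measurable measurable_snd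
  have hIntf : Integrable (S.indicator fun p : ℝ × ℝ => p.2) (μ.prod μ) :=
    hInt2.indicator hS
  have step1 : (∫ p in S, p.2 ∂(μ.prod μ))
      = ∫ x, ∫ y, S.indicator (fun p : ℝ × ℝ => p.2) (x, y) ∂μ ∂μ := by
    rw [← integral_indicator hS, integral_prod _ hIntf]
  have inner_eval : ∀ x : ℝ,
      (∫ y, S.indicator (fun p : ℝ × ℝ => p.2) (x, y) ∂μ)
        = (Set.Icc (-th) (-th + gh)).indicator
            (fun x => -((Real.sqrt (2 * π))⁻¹ *
              Real.exp (-((-t - x * Real.cos θ) / Real.sin θ) ^ 2 / 2))) x := by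
    intro x
    by_cases hx : -th ≤ x ∧ x ≤ -th + gh
    · have heq : (fun y => S.indicator (fun p : ℝ × ℝ => p.2) (x, y))
          = (Set.Iic ((-t - x * Real.cos θ) / Real.sin θ)).indicator (fun y => y) := by
        funext y
        have hiff : ((x, y) ∈ S) ↔ y ∈ Set.Iic ((-t - x * Real.cos θ) / Real.sin θ) := by
          simp only [hSdef, Set.mem_setOf_eq, Set.mem_Iic]
          rw [le_div_iff₀ hsinpos]
          tauto
        by_cases hy : (x, y) ∈ S
        · rw [Set.indicator_of_mem hy, Set.indicator_of_mem (hiff.mp hy)]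
        · rw [Set.indicator_of_notMem hy, Set.indicator_of_notMem (fun h => hy (hiff.mpr h))]
      rw [heq, Set.indicator_of_mem (Set.mem_Icc.mpr hx)]
      have := band_integral_Iic_id_gaussian ((-t - x * Real.cos θ) / Real.sin θ)
      rw [← this, ← integral_indicator measurableSet_Iic]
    · have heq : (fun y => S.indicator (fun p : ℝ × ℝ => p.2) (x, y))
          = fun _ => (0:ℝ) := by
        funext y
        apply Set.indicator_of_notMem
        simp only [hSdef, Set.mem_setOf_eq]
        tauto
      rw [heq, Set.indicator_of_notMem (fun h => hx (Set.mem_Icc.mp h))]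
      simp
  have step2 : (∫ p in S, p.2 ∂(μ.prod μ))
      = ∫ x in Set.Icc (-th) (-th + gh),
          -((Real.sqrt (2 * π))⁻¹ *
            Real.exp (-((-t - x * Real.cos θ) / Real.sin θ) ^ 2 / 2)) ∂μ := by
    rw [step1]
    simp_rw [inner_eval]
    rw [integral_indicator measurableSet_Icc]
  have hconstle : ∀ x ∈ Set.Icc (-th) (-th + gh),
      -((Real.sqrt (2 * π))⁻¹ *
        Real.exp (-((-t - x * Real.cos θ) / Real.sin θ) ^ 2 / 2))
      ≤ -(2 / (3 * Real.sqrt (2 * π))) := by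
    intro x hx
    obtain ⟨hx1, hx2⟩ := Set.mem_Icc.mp hx
    have hb := hbound x hx1 hx2
    have hu2 : ((-t - x * Real.cos θ) / Real.sin θ) ^ 2 ≤ 9/16 := by
      rw [div_pow, div_le_iff₀ (by positivity)]
      have h1 : (-t - x * Real.cos θ) ^ 2 ≤ (3/4 * Real.sin θ) ^ 2 := by
        rw [← sq_abs (-t - x * Real.cos θ)]
        exact pow_le_pow_left₀ (abs_nonneg _) hb 2
      nlinarith [h1]
    have hexp : (2:ℝ)/3 ≤ Real.exp (-((-t - x * Real.cos θ) / Real.sin θ) ^ 2 / 2) := by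
      have h := Real.add_one_le_exp (-((-t - x * Real.cos θ) / Real.sin θ) ^ 2 / 2)
      linarith
    have hsq : (0:ℝ) < Real.sqrt (2 * π) := Real.sqrt_pos.mpr (by positivity)
    rw [neg_le_neg_iff, div_le_iff₀ (by positivity)]
    have heq : (Real.sqrt (2 * π))⁻¹ *
        Real.exp (-((-t - x * Real.cos θ) / Real.sin θ) ^ 2 / 2) * (3 * Real.sqrt (2 * π))
        = 3 * Real.exp (-((-t - x * Real.cos θ) / Real.sin θ) ^ 2 / 2) := by
      field_simp
    rw [heq]
    linarith
  have hμIcc : ((μ.prod μ) {p : ℝ × ℝ | -th ≤ p.1 ∧ p.1 ≤ -th + gh}).toReal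
      = (μ (Set.Icc (-th) (-th + gh))).toReal := by
    have hset : {p : ℝ × ℝ | -th ≤ p.1 ∧ p.1 ≤ -th + gh}
        = (Set.Icc (-th) (-th + gh)) ×ˢ (Set.univ : Set ℝ) := by
      ext p; simp [Set.mem_Icc]
    rw [hset, Measure.prod_prod]
    simp
  have hfin : μ (Set.Icc (-th) (-th + gh)) ≠ ⊤ := measure_ne_top _ _
  have hIntG : IntegrableOn (fun x =>
      -((Real.sqrt (2 * π))⁻¹ *
        Real.exp (-((-t - x * Real.cos θ) / Real.sin θ) ^ 2 / 2)))
      (Set.Icc (-th) (-th + gh)) μ := by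
    apply ContinuousOn.integrableOn_compact isCompact_Icc
    apply Continuous.continuousOn
    fun_prop
  have hmono : (∫ x in Set.Icc (-th) (-th + gh),
      -((Real.sqrt (2 * π))⁻¹ *
        Real.exp (-((-t - x * Real.cos θ) / Real.sin θ) ^ 2 / 2)) ∂μ)
      ≤ ∫ _x in Set.Icc (-th) (-th + gh), -(2 / (3 * Real.sqrt (2 * π))) ∂μ := by
    apply setIntegral_mono_on hIntG (integrableOn_const hfin)
      measurableSet_Icc hconstle
  rw [step2, hμIcc]
  refine le_trans hmono ?_
  rw [setIntegral_const]
  rw [smul_eq_mul, mul_comm]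
  exact le_rfl
end

section
/- Assume the Scalar parameter conditions and additionally t < 1. Let x₁, x₂ be independent standard Gaussian random variables and let E denote the event {−t̂ ≤ x₁ ≤ −t̂ + γ̂}. Then E[x₂·1{E and x₂·sin θ ≤ −t − x₁·cos θ}] ≤ −Pr[E]/(2√(2π)). -/
open MeasureTheory ProbabilityTheory Real Filter


set_option maxHeartbeats 1000000 in

lemma J_aux (b : ℝ) : ∫ y in Set.Iic b, y * rexp (-y^2/2) = -rexp (-b^2/2) := by
  have hderiv : ∀ y ∈ Set.Iic b, HasDerivAt (fun z : ℝ => -rexp (-z^2/2))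
      (y * rexp (-y^2/2)) y := by
    intro y _
    have h0 : HasDerivAt (fun z : ℝ => -z^2/2) (-y) y := by
      have h := ((hasDerivAt_pow 2 y).neg.div_const 2)
      exact h.congr_deriv (by simp; ring)
    have h2 := (h0.exp).neg
    exact h2.congr_deriv (by ring)
  have hint : IntegrableOn (fun y : ℝ => y * rexp (-y^2/2)) (Set.Iic b) volume := by
    have h := integrable_mul_exp_neg_mul_sq (b := (1/2:ℝ)) (by norm_num)
    have heq : (fun y : ℝ => y * rexp (-y^2/2)) = fun y : ℝ => y * rexp (-(1/2)*y^2) := by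
      funext y; congr 2; ring
    rw [heq]; exact h.integrableOn
  have htend : Tendsto (fun y : ℝ => -rexp (-y^2/2)) atBot (nhds 0) := by
    have h1 : Tendsto (fun y : ℝ => -y^2/2) atBot atBot := by
      apply tendsto_atBot_mono' atBot _ tendsto_id
      filter_upwards [eventually_le_atBot (-2:ℝ)] with y hy
      have hy0 : (0:ℝ) ≤ -y := by linarith
      have hy2 : (0:ℝ) ≤ -(y+2) := by linarith
      simp only [id_eq]
      nlinarith [mul_nonneg hy0 hy2]
    have h5 := (Real.tendsto_exp_atBot).comp h1
    simpa [Function.comp] using h5.neg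
  have := integral_Iic_of_hasDerivAt_of_tendsto' hderiv hint htend
  simpa using this

lemma gaussA : gaussianReal 0 1 =
    volume.withDensity fun x => ((gaussianPDFReal 0 1 x).toNNReal : ENNReal) := by
  rw [gaussianReal_of_var_ne_zero _ one_ne_zero]
  rfl

lemma pdf_meas : Measurable fun x => (gaussianPDFReal 0 1 x).toNNReal :=
  (measurable_gaussianPDFReal 0 1).real_toNNReal

lemma pdf_eq (y : ℝ) : gaussianPDFReal 0 1 y = (Real.sqrt (2*π))⁻¹ * rexp (-y^2/2) := by
  simp [gaussianPDFReal]

lemma gauss_Iic (b : ℝ) :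
    ∫ y in Set.Iic b, y ∂(gaussianReal 0 1) = -((Real.sqrt (2*π))⁻¹ * rexp (-b^2/2)) := by
  rw [gaussA, setIntegral_withDensity_eq_setIntegral_smul pdf_meas _ measurableSet_Iic]
  have h : ∀ y : ℝ, (gaussianPDFReal 0 1 y).toNNReal • y
      = (Real.sqrt (2*π))⁻¹ * (y * rexp (-y^2/2)) := by
    intro y
    rw [NNReal.smul_def, Real.coe_toNNReal _ (gaussianPDFReal_nonneg _ _ _), pdf_eq,
      smul_eq_mul]
    ring
  simp only [h]
  rw [integral_const_mul, J_aux]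
  ring

lemma gauss_int_id : Integrable (fun y : ℝ => y) (gaussianReal 0 1) := by
  rw [gaussA, integrable_withDensity_iff (pdf_meas.coe_nnreal_ennreal)
    (Filter.Eventually.of_forall fun x => ENNReal.coe_lt_top)]
  have heq : (fun y : ℝ => y * ((((gaussianPDFReal 0 1 y).toNNReal : ENNReal)).toReal))
      = fun y : ℝ => (Real.sqrt (2*π))⁻¹ * (y * rexp (-y^2/2)) := by
    funext y
    rw [ENNReal.coe_toReal, Real.coe_toNNReal _ (gaussianPDFReal_nonneg _ _ _), pdf_eq]
    ring
  rw [heq]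
  apply Integrable.const_mul
  have h := integrable_mul_exp_neg_mul_sq (b := (1/2:ℝ)) (by norm_num)
  have heq2 : (fun y : ℝ => y * rexp (-y^2/2)) = fun y : ℝ => y * rexp (-(1/2)*y^2) := by
    funext y; congr 2; ring
  rw [heq2]; exact h

set_option maxHeartbeats 2000000 in
lemma scalar_bound (t th ε' gh θ : ℝ) (hε' : ε' ∈ Set.Ioo (0:ℝ) 1) (ht0 : 0 ≤ t)
    (hθ : θ ∈ Set.Icc (0:ℝ) (π/2)) (hθl : ε' * rexp (t^2/2) ≤ θ)
    (hθt : 0 < t → θ ≤ 1/(5*t))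
    (hth : |th - t| ≤ ε'^2/8) (hgh : gh = 1/2*ε'*rexp (th^2/2)) (ht : t < 1)
    {x : ℝ} (hx : x ∈ Set.Icc (-th) (-th+gh)) :
    (t + x * Real.cos θ)^2 ≤ 2 * Real.log 2 * Real.sin θ^2 := by
  obtain ⟨hε0, hε1⟩ := hε'
  obtain ⟨hx1, hx2⟩ := hx
  have hπl : (3.141592 : ℝ) < π := pi_gt_d6
  have hπu : π < 3.141593 := pi_lt_d6
  have hπ0 : (0:ℝ) < π := by linarith
  have hθ0 : 0 < θ := lt_of_lt_of_le (by positivity) hθl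
  have hθhi : θ ≤ π/2 := hθ.2
  have hc0 : 0 ≤ Real.cos θ := Real.cos_nonneg_of_mem_Icc ⟨by linarith, hθhi⟩
  have hc1 : Real.cos θ ≤ 1 := Real.cos_le_one θ
  have hs0 : 0 < Real.sin θ := Real.sin_pos_of_pos_of_lt_pi hθ0 (by linarith)
  have hjordan : 2/π*θ ≤ Real.sin θ := Real.mul_le_sin hθ0.le hθhi
  have hθs : θ ≤ π/2*Real.sin θ := by
    have h := mul_le_mul_of_nonneg_left hjordan (by positivity : (0:ℝ) ≤ π/2)
    have h2 : π/2*(2/π*θ) = θ := by field_simp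
    linarith
  have hεsq : ε'*ε' ≤ ε'*1 := mul_le_mul_of_nonneg_left hε1.le hε0.le
  have hεθ : ε' ≤ θ := by
    have h1 : (1:ℝ) ≤ rexp (t^2/2) := Real.one_le_exp (by positivity)
    have h2 := mul_le_mul_of_nonneg_left h1 hε0.le
    linarith
  have hcos2 : 1 - Real.cos θ ≤ θ^2/2 := by
    have := Real.one_sub_sq_div_two_le_cos (x := θ); linarith
  have hδ := abs_le.mp hth
  have hδ1 : th - t ≤ ε'^2/8 := hδ.2
  have hδ2 : -(ε'^2/8) ≤ th - t := hδ.1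
  have hε2 : ε'^2/8 ≤ 1/8 := by linarith
  have hth1 : th ≤ t + 1/8 := by linarith
  have E1 : ε'^2/8 ≤ π/16 * Real.sin θ := by
    have h1 : 2/π*ε' ≤ 2/π*θ := mul_le_mul_of_nonneg_left hεθ (by positivity)
    have h2 : π/16*(2/π*ε') = ε'/8 := by field_simp; ring
    have h3 := mul_le_mul_of_nonneg_left (le_trans h1 hjordan) (by positivity : (0:ℝ) ≤ π/16)
    linarith
  have htθ : t*(1-Real.cos θ) ≤ θ/10 := by
    rcases eq_or_lt_of_le ht0 with h | h
    · rw [← h]; simp; positivity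
    · have h5 : θ ≤ 1/(5*t) := hθt h
      have h6 : t*θ ≤ 1/5 := by
        have h7 := mul_le_mul_of_nonneg_left h5 (by positivity : (0:ℝ) ≤ 5*t)
        have h8 : (5*t) * (1/(5*t)) = 1 := by field_simp
        linarith
      have h9 := mul_le_mul_of_nonneg_left hcos2 h.le
      have h10 := mul_le_mul_of_nonneg_right h6 hθ0.le
      linarith
  have E2 : t*(1-Real.cos θ) ≤ π/20*Real.sin θ := by linarith
  have E3 : (1/8)*(1-Real.cos θ) ≤ π^2/64*Real.sin θ := by
    have p1 : θ*θ ≤ π/2*θ := mul_le_mul_of_nonneg_right hθhi hθ0.le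
    have p2 := mul_le_mul_of_nonneg_left hθs (show (0:ℝ) ≤ π/4 by positivity)
    linarith [hcos2, p1, p2]
  have hθc : θ*Real.cos θ ≤ Real.sin θ := by
    rcases lt_or_eq_of_le hθhi with h | h
    · have htan := Real.lt_tan hθ0 h
      rw [Real.tan_eq_sin_div_cos] at htan
      have hcpos : 0 < Real.cos θ := Real.cos_pos_of_mem_Ioo ⟨by linarith, h⟩
      rw [lt_div_iff₀ hcpos] at htan
      linarith
    · rw [h, Real.cos_pi_div_two, mul_zero]
      norm_num [Real.sin_pi_div_two]
  have hexp : rexp ((th^2 - t^2)/2) ≤ 128/111 := by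
    have hub : (th^2 - t^2)/2 ≤ 17/128 := by
      have q1 : (0:ℝ) ≤ (1/8 - (th - t))*t :=
        mul_nonneg (by linarith) ht0
      have q2 : (0:ℝ) ≤ (1/8 - (th - t))*(1/8 + (th - t)) :=
        mul_nonneg (by linarith) (by linarith)
      linarith [q1, q2]
    have h1 : rexp ((th^2 - t^2)/2) ≤ rexp (17/128) := Real.exp_le_exp.mpr hub
    have h2 : (1:ℝ) - 17/128 ≤ rexp (-(17/128)) := by
      have := Real.add_one_le_exp (-(17/128) : ℝ); linarith
    have h3 : (0:ℝ) < rexp ((17:ℝ)/128) := Real.exp_pos _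
    have h4 : rexp (-(17/128)) * rexp ((17:ℝ)/128) = 1 := by
      rw [← Real.exp_add]; norm_num
    have r1 : (0:ℝ) ≤ (rexp (-(17/128)) - 111/128) * rexp ((17:ℝ)/128) :=
      mul_nonneg (by linarith) h3.le
    linarith [r1, h4, h1]
  have E4 : gh*Real.cos θ ≤ 64/111*Real.sin θ := by
    have hEA : rexp (th^2/2) = rexp ((th^2-t^2)/2) * rexp (t^2/2) := by
      rw [← Real.exp_add]; ring_nf
    have hR0 : (0:ℝ) < rexp ((th^2-t^2)/2) := Real.exp_pos _
    have h1 : gh*Real.cos θ = 1/2 * (rexp ((th^2-t^2)/2) * (ε' * rexp (t^2/2) * Real.cos θ)) := by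
      rw [hgh, hEA]; ring
    have h2 : ε' * rexp (t^2/2) * Real.cos θ ≤ θ * Real.cos θ :=
      mul_le_mul_of_nonneg_right hθl hc0
    have r1 : (0:ℝ) ≤ rexp ((th^2-t^2)/2) * (Real.sin θ - ε' * rexp (t^2/2) * Real.cos θ) :=
      mul_nonneg hR0.le (by linarith)
    have r2 : (0:ℝ) ≤ (128/111 - rexp ((th^2-t^2)/2)) * Real.sin θ :=
      mul_nonneg (by linarith) hs0.le
    linarith [h1, r1, r2]
  have hxc : x*Real.cos θ ≤ (-th+gh)*Real.cos θ := mul_le_mul_of_nonneg_right hx2 hc0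
  have hth_c : th*(1-Real.cos θ) ≤ (t + 1/8)*(1-Real.cos θ) :=
    mul_le_mul_of_nonneg_right hth1 (by linarith)
  have hub2 : t + x*Real.cos θ ≤ (π/16 + π/20 + π^2/64 + 64/111) * Real.sin θ := by
    linarith [hxc, hδ2, hth_c, E1, E2, E3, E4]
  have hthc2 : th * Real.cos θ ≤ t + ε'^2/8 := by
    have r1 : (0:ℝ) ≤ (t + ε'^2/8 - th) * Real.cos θ :=
      mul_nonneg (by linarith) hc0
    have r2 : (0:ℝ) ≤ (t + ε'^2/8) * (1 - Real.cos θ) :=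
      mul_nonneg (by positivity) (by linarith)
    linarith [r1, r2, mul_nonneg hs0.le hs0.le]
  have hlb : -(π/16*Real.sin θ) ≤ t + x*Real.cos θ := by
    have h1 : -th*Real.cos θ ≤ x*Real.cos θ := mul_le_mul_of_nonneg_right hx1 hc0
    linarith [h1, hthc2, E1]
  have hl2 : (0.6931471803 : ℝ) < Real.log 2 := Real.log_two_gt_d9
  have hπsq : π^2 ≤ 9.869607 := by
    linarith [mul_nonneg (show (0:ℝ) ≤ 3.141593 - π by linarith)
      (show (0:ℝ) ≤ 3.141593 + π by linarith)]
  have hKu : t + x*Real.cos θ ≤ 1.084219 * Real.sin θ := by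
    have hK1 : π/16 + π/20 + π^2/64 + 64/111 ≤ 1.084219 := by linarith
    have r : (0:ℝ) ≤ (1.084219 - (π/16 + π/20 + π^2/64 + 64/111)) * Real.sin θ :=
      mul_nonneg (by linarith) hs0.le
    linarith [hub2, r]
  have hKl : -(1.084219 * Real.sin θ) ≤ t + x*Real.cos θ := by
    have r : (0:ℝ) ≤ (1.084219 - π/16) * Real.sin θ :=
      mul_nonneg (by linarith) hs0.le
    linarith [hlb, r]
  have r1 : (0:ℝ) ≤ (1.084219*Real.sin θ - (t + x*Real.cos θ))
      * (1.084219*Real.sin θ + (t + x*Real.cos θ)) :=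
    mul_nonneg (by linarith) (by linarith)
  have r2 : (0:ℝ) ≤ (2*Real.log 2 - 1.17554) * (Real.sin θ * Real.sin θ) :=
    mul_nonneg (by linarith) (mul_nonneg hs0.le hs0.le)
  linarith [r1, r2, mul_nonneg hs0.le hs0.le]

set_option maxHeartbeats 1000000 in
/-- Under the scalar parameter conditions, if additionally `t < 1`,
then for independent standard Gaussians `x₁, x₂` and the event
`E = {−t̂ ≤ x₁ ≤ −t̂ + γ̂}`,
`E[x₂·1{E and x₂ sin θ ≤ −t − x₁ cos θ}] ≤ −Pr[E]/(2√(2π))`. -/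
theorem band_expectation_bound_small_t
    (t th ε' gh θ : ℝ) (hε' : ε' ∈ Set.Ioo (0 : ℝ) 1)
    (ht0 : 0 ≤ t) (ht1 : t ≤ Real.sqrt (2 * Real.log (1 / ε')))
    (hθ : θ ∈ Set.Icc (0 : ℝ) (π / 2))
    (hθl : ε' * Real.exp (t ^ 2 / 2) ≤ θ)
    (hθt : 0 < t → θ ≤ 1 / (5 * t))
    (hth : |th - t| ≤ ε' ^ 2 / 8)
    (hgh : gh = (1 / 2) * ε' * Real.exp (th ^ 2 / 2))
    (ht : t < 1) :
    (∫ p in {p : ℝ × ℝ | (-th ≤ p.1 ∧ p.1 ≤ -th + gh) ∧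
        p.2 * Real.sin θ ≤ -t - p.1 * Real.cos θ}, p.2
        ∂((gaussianReal 0 1).prod (gaussianReal 0 1)))
      ≤ -(((gaussianReal 0 1).prod (gaussianReal 0 1))
          {p : ℝ × ℝ | -th ≤ p.1 ∧ p.1 ≤ -th + gh}).toReal / (2 * Real.sqrt (2 * π)) := by
  set μ := gaussianReal 0 1 with hμ
  set B := Set.Icc (-th) (-th + gh) with hB
  set S := {p : ℝ × ℝ | (-th ≤ p.1 ∧ p.1 ≤ -th + gh) ∧
      p.2 * Real.sin θ ≤ -t - p.1 * Real.cos θ} with hSdef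
  -- basic facts
  have hθ0 : 0 < θ := lt_of_lt_of_le (by have := hε'.1; positivity) hθl
  have hs0 : 0 < Real.sin θ :=
    Real.sin_pos_of_pos_of_lt_pi hθ0 (lt_of_le_of_lt hθ.2 (by linarith [pi_pos]))
  set a : ℝ → ℝ := fun x => (-t - x * Real.cos θ) / Real.sin θ with ha
  have hSeq : S = (B ×ˢ (Set.univ : Set ℝ)) ∩ {p : ℝ × ℝ | p.2 * Real.sin θ ≤ -t - p.1 * Real.cos θ} := by
    ext p
    simp only [hSdef, Set.mem_setOf_eq, Set.mem_inter_iff, Set.mem_prod, Set.mem_univ,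
      and_true, hB, Set.mem_Icc]
  have hS : MeasurableSet S := by
    rw [hSeq]
    exact (measurableSet_Icc.prod MeasurableSet.univ).inter
      (measurableSet_le (by fun_prop) (by fun_prop))
  -- RHS set
  have hBset : {p : ℝ × ℝ | -th ≤ p.1 ∧ p.1 ≤ -th + gh} = B ×ˢ (Set.univ : Set ℝ) := by
    ext p
    simp only [Set.mem_setOf_eq, Set.mem_prod, Set.mem_univ, and_true, hB, Set.mem_Icc]
  rw [hBset, Measure.prod_prod, measure_univ, mul_one]
  -- integrability of indicator
  have hmap : Measure.map Prod.snd (μ.prod μ) = μ := by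
    rw [Measure.map_snd_prod, measure_univ, one_smul]
  have hsnd : Integrable (fun p : ℝ × ℝ => p.2) (μ.prod μ) := by
    have h0 : Integrable (fun y : ℝ => y) (Measure.map Prod.snd (μ.prod μ)) := by
      rw [hmap]; exact gauss_int_id
    have := (integrable_map_measure aestronglyMeasurable_id measurable_snd.aemeasurable).mp h0
    exact this
  have hind : Integrable (S.indicator fun p : ℝ × ℝ => p.2) (μ.prod μ) :=
    hsnd.indicator hS
  -- Fubini
  have step1 : (∫ p in S, p.2 ∂(μ.prod μ))
      = ∫ x, ∫ y, S.indicator (fun p : ℝ × ℝ => p.2) (x, y) ∂μ ∂μ := by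
    rw [← integral_indicator hS]
    exact integral_prod _ hind
  have inner_eq : ∀ x : ℝ, (∫ y, S.indicator (fun p : ℝ × ℝ => p.2) (x, y) ∂μ)
      = B.indicator (fun x' => ∫ y in Set.Iic (a x'), y ∂μ) x := by
    intro x
    by_cases hx : x ∈ B
    · rw [Set.indicator_of_mem hx]
      have he : (fun y => S.indicator (fun p : ℝ × ℝ => p.2) (x, y))
          = (Set.Iic (a x)).indicator (fun y => y) := by
        funext y
        by_cases hy : y ∈ Set.Iic (a x)
        · rw [Set.indicator_of_mem hy, Set.indicator_of_mem]
          refine ⟨⟨?_, ?_⟩, ?_⟩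
          · exact (Set.mem_Icc.mp hx).1
          · exact (Set.mem_Icc.mp hx).2
          · exact (le_div_iff₀ hs0).mp hy
        · rw [Set.indicator_of_notMem hy, Set.indicator_of_notMem]
          intro hmem
          exact hy ((le_div_iff₀ hs0).mpr hmem.2)
      rw [he, integral_indicator measurableSet_Iic]
    · rw [Set.indicator_of_notMem hx]
      have he : (fun y => S.indicator (fun p : ℝ × ℝ => p.2) (x, y)) = fun _ => (0:ℝ) := by
        funext y
        apply Set.indicator_of_notMem
        intro hmem
        exact hx (Set.mem_Icc.mpr ⟨hmem.1.1, hmem.1.2⟩)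
      rw [he, integral_zero]
  have step2 : (∫ x, ∫ y, S.indicator (fun p : ℝ × ℝ => p.2) (x, y) ∂μ ∂μ)
      = ∫ x in B, (fun x' => -((Real.sqrt (2*π))⁻¹ * rexp (-(a x')^2/2))) x ∂μ := by
    rw [show (fun x : ℝ => ∫ y, S.indicator (fun p : ℝ × ℝ => p.2) (x, y) ∂μ)
        = B.indicator (fun x' => ∫ y in Set.Iic (a x'), y ∂μ) from funext inner_eq]
    rw [integral_indicator measurableSet_Icc]
    apply setIntegral_congr_fun measurableSet_Icc
    intro x _
    exact gauss_Iic (a x)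
  rw [step1, step2]
  -- pointwise bound and monotonicity
  have hsqrt0 : 0 < Real.sqrt (2*π) := Real.sqrt_pos.mpr (by positivity)
  have hbound : ∀ x ∈ B, -((Real.sqrt (2*π))⁻¹ * rexp (-(a x)^2/2))
      ≤ -(1/(2 * Real.sqrt (2*π))) := by
    intro x hx
    have hsc := scalar_bound t th ε' gh θ hε' ht0 hθ hθl hθt hth hgh ht hx
    have hsq : (a x)^2 ≤ 2 * Real.log 2 := by
      rw [ha]
      rw [div_pow, div_le_iff₀ (by positivity)]
      calc (-t - x * Real.cos θ)^2 = (t + x * Real.cos θ)^2 := by ring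
        _ ≤ 2 * Real.log 2 * Real.sin θ^2 := hsc
    have hexp : (1:ℝ)/2 ≤ rexp (-(a x)^2/2) := by
      have h1 : Real.log (1/2) ≤ -(a x)^2/2 := by
        rw [one_div, Real.log_inv]
        linarith
      calc (1:ℝ)/2 = rexp (Real.log (1/2)) := by
            rw [Real.exp_log]; norm_num
        _ ≤ rexp (-(a x)^2/2) := Real.exp_le_exp.mpr h1
    have h2 : (1:ℝ)/(2 * Real.sqrt (2*π)) ≤ (Real.sqrt (2*π))⁻¹ * rexp (-(a x)^2/2) := by
      rw [div_le_iff₀ (by positivity)]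
      have : (Real.sqrt (2*π))⁻¹ * rexp (-(a x)^2/2) * (2 * Real.sqrt (2*π))
          = rexp (-(a x)^2/2) * 2 * ((Real.sqrt (2*π))⁻¹ * Real.sqrt (2*π)) := by ring
      rw [this, inv_mul_cancel₀ (ne_of_gt hsqrt0), mul_one]
      linarith
    linarith
  have hcont : Integrable (fun x => -((Real.sqrt (2*π))⁻¹ * rexp (-(a x)^2/2))) μ := by
    apply Integrable.mono' (integrable_const ((Real.sqrt (2*π))⁻¹))
    · apply Continuous.aestronglyMeasurable
      fun_prop
    · apply ae_of_all
      intro x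
      rw [norm_neg, norm_mul, Real.norm_eq_abs, Real.norm_eq_abs,
        abs_of_nonneg (by positivity), abs_of_nonneg (Real.exp_pos _).le]
      have h1 : rexp (-(a x)^2/2) ≤ 1 := Real.exp_le_one_iff.mpr (by nlinarith [sq_nonneg (a x)])
      nlinarith [inv_pos.mpr hsqrt0]
  have hmono : (∫ x in B, -((Real.sqrt (2*π))⁻¹ * rexp (-(a x)^2/2)) ∂μ)
      ≤ ∫ x in B, -(1/(2 * Real.sqrt (2*π))) ∂μ := by
    apply setIntegral_mono_on hcont.integrableOn (integrableOn_const (measure_ne_top _ _))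
      measurableSet_Icc
    exact hbound
  have hconst : (∫ x in B, -(1/(2 * Real.sqrt (2*π))) ∂μ)
      = -(μ B).toReal / (2 * Real.sqrt (2*π)) := by
    rw [setIntegral_const, smul_eq_mul, measureReal_def]
    ring
  calc (∫ x in B, (fun x' => -((Real.sqrt (2*π))⁻¹ * rexp (-(a x')^2/2))) x ∂μ)
      ≤ ∫ x in B, -(1/(2 * Real.sqrt (2*π))) ∂μ := hmono
    _ = -(μ B).toReal / (2 * Real.sqrt (2*π)) := hconst
end

section
/- Let d ≥ 1, let C₁ > 0, set ρ = 0.00098, φ_k = (1 − ρ)^k, and μ_k = (1 − 4ρ)·φ_k/(16·C₁) for k ≥ 1. Let w* and (w_k)_{k≥1} be unit vectors in ℝ^d, write θ_k for the angle between w_k and w*, and assume θ₁ ≤ π/2. Assume that for every k ≥ 1: (i) ‖w_{k+1} − w*‖₂² ≤ ‖w_k − w*‖₂² − (C₁/2)·μ_k·sin θ_k + 4·C₁²·μ_k², and (ii) ‖w_{k+1} − w_k‖₂ ≤ 2·μ_k·C₁. Then sin(θ_k/2) ≤ φ_k for every k ≥ 1. -/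
open Real

/-- The contraction rate `ρ = 0.00098`. -/
noncomputable def rho : ℝ := 0.00098

/-- `φ_k = (1 − ρ)^k`. -/
noncomputable def phi (k : ℕ) : ℝ := (1 - rho) ^ k

/-- The step size `μ_k = (1 − 4ρ)·φ_k/(16·C₁)`. -/
noncomputable def stepSize (C₁ : ℝ) (k : ℕ) : ℝ := (1 - 4 * rho) * phi k / (16 * C₁)

lemma norm_sub_unit {d : ℕ} (a b : EuclideanSpace ℝ (Fin d)) (ha : ‖a‖ = 1) (hb : ‖b‖ = 1) :
    ‖a - b‖ = 2 * Real.sin (InnerProductGeometry.angle a b / 2) := by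
  set θ := InnerProductGeometry.angle a b with hθ
  have h0 : 0 ≤ θ := InnerProductGeometry.angle_nonneg a b
  have hpi : θ ≤ π := InnerProductGeometry.angle_le_pi a b
  have hinner : (inner ℝ a b : ℝ) = Real.cos θ := by
    rw [hθ, InnerProductGeometry.cos_angle, ha, hb]; norm_num
  have hsq : ‖a - b‖ ^ 2 = 2 - 2 * Real.cos θ := by
    rw [norm_sub_sq_real, ha, hb, hinner]; ring
  have hdouble : Real.cos θ = 1 - 2 * Real.sin (θ / 2) ^ 2 := by
    have h1 := Real.sin_sq_eq_half_sub (θ / 2)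
    rw [show 2 * (θ / 2) = θ by ring] at h1
    linarith
  have hsin0 : 0 ≤ Real.sin (θ / 2) :=
    Real.sin_nonneg_of_nonneg_of_le_pi (by linarith) (by linarith [Real.pi_pos])
  have hsq2 : ‖a - b‖ ^ 2 = (2 * Real.sin (θ / 2)) ^ 2 := by
    rw [hsq, hdouble]; ring
  have := congrArg Real.sqrt hsq2
  rwa [Real.sqrt_sq (norm_nonneg _), Real.sqrt_sq (by linarith)] at this

lemma key (s c t p : ℝ) (hs0 : 0 ≤ s) (hc0 : 0 ≤ c) (hsc : s ^ 2 + c ^ 2 = 1)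
    (hsp : s ≤ p) (hs2 : s ^ 2 ≤ 1 / 2) (hp0 : 0 < p) (hp1 : p ≤ 1) (ht0 : 0 ≤ t)
    (H1 : 4 * t ^ 2 ≤ 4 * s ^ 2 - (1 - 4 * 0.00098) * p * (2 * s * c) / 32
          + (1 - 4 * 0.00098) ^ 2 * p ^ 2 / 64)
    (H2 : t ≤ s + (1 - 4 * 0.00098) * p / 16) :
    t ≤ (1 - 0.00098) * p ∧ t ^ 2 ≤ 1 / 2 := by
  have hc7 : 0.7 ≤ c := by nlinarith
  constructor
  · rcases le_or_gt s (0.93676 * p) with h | h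
    · nlinarith
    · have hsc' : 0.655 * p ≤ s * c := by nlinarith
      have hscp : 0.655 * p * p ≤ s * c * p :=
        mul_le_mul_of_nonneg_right hsc' hp0.le
      nlinarith [mul_pos hp0 hp0, sq_nonneg (t + (1 - 0.00098) * p)]
  · rcases le_or_gt s 0.64 with h | h
    · nlinarith [mul_self_nonneg (0.703 - t)]
    · have hsc' : 0.448 ≤ s * c := by nlinarith
      have hscp : 0.448 * p ≤ s * c * p :=
        mul_le_mul_of_nonneg_right hsc' hp0.le
      nlinarith [mul_pos hp0 hp0]

/-- If the unit-vector iterates `(w_k)` satisfy the per-step contraction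
and movement bounds with step sizes `μ_k`, and the initial angle is at most `π/2`, then
`sin(θ_k/2) ≤ φ_k` for every `k ≥ 1`, where `θ_k` is the angle between `w_k` and `w*`. -/
theorem step_size_contraction (d : ℕ) (hd : 1 ≤ d) (C₁ : ℝ) (hC₁ : 0 < C₁)
    (wstar : EuclideanSpace ℝ (Fin d)) (w : ℕ → EuclideanSpace ℝ (Fin d))
    (hws : ‖wstar‖ = 1) (hw : ∀ k, 1 ≤ k → ‖w k‖ = 1)
    (hθ1 : InnerProductGeometry.angle (w 1) wstar ≤ π / 2)
    (hcontract : ∀ k, 1 ≤ k →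
      ‖w (k + 1) - wstar‖ ^ 2 ≤ ‖w k - wstar‖ ^ 2
        - (C₁ / 2) * stepSize C₁ k * Real.sin (InnerProductGeometry.angle (w k) wstar)
        + 4 * C₁ ^ 2 * stepSize C₁ k ^ 2)
    (hmove : ∀ k, 1 ≤ k → ‖w (k + 1) - w k‖ ≤ 2 * stepSize C₁ k * C₁) :
    ∀ k, 1 ≤ k →
      Real.sin (InnerProductGeometry.angle (w k) wstar / 2) ≤ phi k := by
  have hpi := Real.pi_pos
  suffices H : ∀ k, 1 ≤ k →
      Real.sin (InnerProductGeometry.angle (w k) wstar / 2) ≤ phi k ∧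
      Real.sin (InnerProductGeometry.angle (w k) wstar / 2) ^ 2 ≤ 1 / 2 by
    exact fun k hk => (H k hk).1
  intro k hk
  induction k, hk using Nat.le_induction with
  | base =>
    have h0 : 0 ≤ InnerProductGeometry.angle (w 1) wstar :=
      InnerProductGeometry.angle_nonneg _ _
    have hs0 : 0 ≤ Real.sin (InnerProductGeometry.angle (w 1) wstar / 2) :=
      Real.sin_nonneg_of_nonneg_of_le_pi (by linarith) (by linarith)
    have hmono : Real.sin (InnerProductGeometry.angle (w 1) wstar / 2) ≤ Real.sin (π / 4) :=
      Real.strictMonoOn_sin.monotoneOn ⟨by linarith, by linarith⟩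
        ⟨by linarith, by linarith⟩ (by linarith)
    rw [Real.sin_pi_div_four] at hmono
    have hsq2 : Real.sqrt 2 ^ 2 = 2 := Real.sq_sqrt (by norm_num)
    have h15 : Real.sqrt 2 ≤ 1.5 := by
      nlinarith [Real.sqrt_nonneg 2]
    constructor
    · have : phi 1 = 1 - rho := by simp [phi]
      rw [this, rho]; norm_num; linarith
    · nlinarith [Real.sqrt_nonneg 2]
  | succ k hk ih =>
    obtain ⟨ih1, ih2⟩ := ih
    have h0 : 0 ≤ InnerProductGeometry.angle (w k) wstar :=
      InnerProductGeometry.angle_nonneg _ _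
    have hle : InnerProductGeometry.angle (w k) wstar ≤ π :=
      InnerProductGeometry.angle_le_pi _ _
    have h0' : 0 ≤ InnerProductGeometry.angle (w (k + 1)) wstar :=
      InnerProductGeometry.angle_nonneg _ _
    have hle' : InnerProductGeometry.angle (w (k + 1)) wstar ≤ π :=
      InnerProductGeometry.angle_le_pi _ _
    have hs0 : 0 ≤ Real.sin (InnerProductGeometry.angle (w k) wstar / 2) :=
      Real.sin_nonneg_of_nonneg_of_le_pi (by linarith) (by linarith)
    have ht0 : 0 ≤ Real.sin (InnerProductGeometry.angle (w (k + 1)) wstar / 2) :=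
      Real.sin_nonneg_of_nonneg_of_le_pi (by linarith) (by linarith)
    have hc0 : 0 ≤ Real.cos (InnerProductGeometry.angle (w k) wstar / 2) :=
      Real.cos_nonneg_of_mem_Icc ⟨by linarith, by linarith⟩
    have hsc : Real.sin (InnerProductGeometry.angle (w k) wstar / 2) ^ 2 +
        Real.cos (InnerProductGeometry.angle (w k) wstar / 2) ^ 2 = 1 :=
      Real.sin_sq_add_cos_sq _
    have hE : ‖w k - wstar‖ = 2 * Real.sin (InnerProductGeometry.angle (w k) wstar / 2) :=
      norm_sub_unit _ _ (hw k hk) hws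
    have hE' : ‖w (k + 1) - wstar‖ =
        2 * Real.sin (InnerProductGeometry.angle (w (k + 1)) wstar / 2) :=
      norm_sub_unit _ _ (hw (k + 1) (by omega)) hws
    have hsin : Real.sin (InnerProductGeometry.angle (w k) wstar) =
        2 * Real.sin (InnerProductGeometry.angle (w k) wstar / 2) *
          Real.cos (InnerProductGeometry.angle (w k) wstar / 2) := by
      rw [show InnerProductGeometry.angle (w k) wstar
            = 2 * (InnerProductGeometry.angle (w k) wstar / 2) by ring,
        Real.sin_two_mul]
      ring_nf
    have hp0 : 0 < phi k := pow_pos (by norm_num [rho]) k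
    have hp1 : phi k ≤ 1 := pow_le_one₀ (by norm_num [rho]) (by norm_num [rho])
    -- contraction in reduced form
    have e1 : (C₁ / 2) * stepSize C₁ k * Real.sin (InnerProductGeometry.angle (w k) wstar)
        = (1 - 4 * 0.00098) * phi k *
            (2 * Real.sin (InnerProductGeometry.angle (w k) wstar / 2) *
              Real.cos (InnerProductGeometry.angle (w k) wstar / 2)) / 32 := by
      rw [hsin]; simp only [stepSize, rho]; field_simp; ring
    have e2 : 4 * C₁ ^ 2 * stepSize C₁ k ^ 2
        = (1 - 4 * 0.00098) ^ 2 * phi k ^ 2 / 64 := by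
      simp only [stepSize, rho]; field_simp; ring
    have Hc := hcontract k hk
    rw [hE, hE', e1, e2] at Hc
    have H1 : 4 * Real.sin (InnerProductGeometry.angle (w (k + 1)) wstar / 2) ^ 2 ≤
        4 * Real.sin (InnerProductGeometry.angle (w k) wstar / 2) ^ 2
        - (1 - 4 * 0.00098) * phi k *
            (2 * Real.sin (InnerProductGeometry.angle (w k) wstar / 2) *
              Real.cos (InnerProductGeometry.angle (w k) wstar / 2)) / 32
        + (1 - 4 * 0.00098) ^ 2 * phi k ^ 2 / 64 := by nlinarith [Hc]
    -- movement bound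
    have e3 : 2 * stepSize C₁ k * C₁ = (1 - 4 * 0.00098) * phi k / 8 := by
      simp only [stepSize, rho]; field_simp; ring
    have htri : ‖w (k + 1) - wstar‖ ≤ ‖w k - wstar‖ + ‖w (k + 1) - w k‖ := by
      have hv : w (k + 1) - wstar = (w k - wstar) + (w (k + 1) - w k) := by abel
      rw [hv]; exact norm_add_le _ _
    have hM := hmove k hk
    rw [e3] at hM
    have H2 : Real.sin (InnerProductGeometry.angle (w (k + 1)) wstar / 2) ≤
        Real.sin (InnerProductGeometry.angle (w k) wstar / 2)
          + (1 - 4 * 0.00098) * phi k / 16 := by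
      rw [hE, hE'] at htri; linarith
    obtain ⟨g1, g2⟩ := key _ _ _ _ hs0 hc0 hsc ih1 ih2 hp0 hp1 ht0 H1 H2
    have hφ : phi (k + 1) = (1 - 0.00098) * phi k := by
      simp [phi, pow_succ, rho]; ring
    exact ⟨by rw [hφ]; exact g1, g2⟩
end

section
/- For every integer i ≥ 1 and every t ∈ ℝ, if z ~ N(0,1) then E[sgn(z − t)·Ĥe_i(z)] = 2·Ĥe_{i−1}(t)·e^{−t²/2}/√(2π). -/
open MeasureTheory ProbabilityTheory Real
open scoped NNReal ENNReal

/-- `sgn u = 1` if `u ≥ 0` and `-1` otherwise. -/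
noncomputable def sgn' (u : ℝ) : ℝ := if 0 ≤ u then 1 else -1

/-- The `i`-th probabilist's Hermite polynomial, evaluated at a real number. -/
noncomputable def hermiteR (i : ℕ) (z : ℝ) : ℝ := Polynomial.aeval z (Polynomial.hermite i)

open Polynomial Filter Set in
private lemma integrable_poly_gauss (P : ℝ[X]) :
    Integrable (fun x : ℝ => P.eval x * Real.exp (-(x ^ 2 / 2))) := by
  induction P using Polynomial.induction_on' with
  | add p q hp hq => simpa [add_mul, Pi.add_def] using hp.add hq
  | monomial n a =>
    have h := (integrable_rpow_mul_exp_neg_mul_sq (b := (1:ℝ)/2) (by norm_num)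
      (s := (n : ℝ)) (by exact lt_of_lt_of_le (by norm_num) (Nat.cast_nonneg n))).const_mul a
    simp_rw [Real.rpow_natCast] at h
    refine h.congr (Filter.Eventually.of_forall fun x => ?_)
    simp only [eval_monomial]
    ring_nf

open Polynomial Filter Set in
private lemma tendsto_poly_gauss_atTop (P : ℝ[X]) :
    Tendsto (fun x : ℝ => P.eval x * Real.exp (-(x ^ 2 / 2))) atTop (nhds 0) := by
  have h : Tendsto (fun x : ℝ => |P.eval x / Real.exp x|) atTop (nhds 0) := by
    simpa using (P.tendsto_div_exp_atTop).abs
  refine squeeze_zero_norm' ?_ h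
  filter_upwards [eventually_ge_atTop (2:ℝ)] with x hx
  have h1 : x ≤ x ^ 2 / 2 := by nlinarith
  calc ‖P.eval x * Real.exp (-(x ^ 2 / 2))‖
      = |P.eval x| * Real.exp (-(x ^ 2 / 2)) := by
        rw [norm_mul, Real.norm_eq_abs, Real.norm_eq_abs, abs_of_pos (Real.exp_pos _)]
    _ ≤ |P.eval x| * Real.exp (-x) :=
        mul_le_mul_of_nonneg_left (Real.exp_le_exp.2 (by linarith)) (abs_nonneg _)
    _ = |P.eval x / Real.exp x| := by
        rw [abs_div, abs_of_pos (Real.exp_pos x), Real.exp_neg, div_eq_mul_inv]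

private lemma hermiteR_eq (n : ℕ) :
    hermiteR n = fun x => (((Polynomial.hermite n).map (algebraMap ℤ ℝ))).eval x := by
  funext x
  simp [hermiteR, Polynomial.aeval_def, Polynomial.eval_map]

private lemma integrable_hermite_gauss (m : ℕ) :
    Integrable (fun x : ℝ => hermiteR m x * Real.exp (-(x ^ 2 / 2))) := by
  rw [hermiteR_eq]; exact integrable_poly_gauss _

open Polynomial Filter Set in
private lemma integrable_hermite_gauss_neg (m : ℕ) :
    Integrable (fun x : ℝ => hermiteR m (-x) * Real.exp (-(x ^ 2 / 2))) := by
  have h := integrable_poly_gauss ((((Polynomial.hermite m).map (algebraMap ℤ ℝ))).comp (-X))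
  refine h.congr (Filter.Eventually.of_forall fun x => ?_)
  simp [hermiteR_eq, eval_comp]

open Polynomial Filter Set in
private lemma tendsto_hermite_gauss_atTop (m : ℕ) :
    Tendsto (fun x : ℝ => hermiteR m x * Real.exp (-(x ^ 2 / 2))) atTop (nhds 0) := by
  rw [hermiteR_eq]; exact tendsto_poly_gauss_atTop _

open Polynomial Filter Set in
private lemma tendsto_hermite_gauss_neg_atTop (m : ℕ) :
    Tendsto (fun x : ℝ => hermiteR m (-x) * Real.exp (-(x ^ 2 / 2))) atTop (nhds 0) := by
  have h := tendsto_poly_gauss_atTop ((((Polynomial.hermite m).map (algebraMap ℤ ℝ))).comp (-X))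
  refine h.congr fun x => ?_
  simp [hermiteR_eq, eval_comp]

open Polynomial Filter Set in
private lemma hasDerivAt_hermite_gauss (n : ℕ) (z : ℝ) :
    HasDerivAt (fun y => hermiteR n y * Real.exp (-(y ^ 2 / 2)))
      (-(hermiteR (n + 1) z * Real.exp (-(z ^ 2 / 2)))) z := by
  have h1 := Polynomial.hasDerivAt_aeval (q := Polynomial.hermite n) (𝕜 := ℝ) z
  have hp : HasDerivAt (fun y : ℝ => -(y ^ 2 / 2)) (-z) z := by
    have := ((hasDerivAt_pow 2 z).div_const 2).neg
    simpa [Pi.neg_def] using this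
  have h2 : HasDerivAt (fun y : ℝ => Real.exp (-(y ^ 2 / 2)))
      (Real.exp (-(z ^ 2 / 2)) * (-z)) z := hp.exp
  have h := h1.mul h2
  refine h.congr_deriv ?_
  simp only [hermiteR, Polynomial.hermite_succ, map_sub, map_mul, Polynomial.aeval_X]
  ring

open Polynomial Filter Set in
/-- For every `i ≥ 1` and `t ∈ ℝ`, if `z ~ N(0,1)` then
`E[sgn(z − t)·Ĥe_i(z)] = 2·Ĥe_{i−1}(t)·e^{−t²/2}/√(2π)`. -/
theorem hermite_coefficient_of_sgn (i : ℕ) (hi : 1 ≤ i) (t : ℝ) :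
    ∫ z, sgn' (z - t) * hermiteR i z ∂(gaussianReal 0 1)
      = 2 * hermiteR (i - 1) t * Real.exp (-t ^ 2 / 2) / Real.sqrt (2 * π) := by
  obtain ⟨n, rfl⟩ : ∃ n, i = n + 1 := ⟨i - 1, (Nat.succ_pred_eq_of_pos hi).symm⟩
  simp only [Nat.add_sub_cancel]
  set c : ℝ := (Real.sqrt (2 * π))⁻¹ with hc
  set e : ℝ → ℝ := fun z => Real.exp (-(z ^ 2 / 2)) with he
  have hpdf : ∀ x, gaussianPDFReal 0 1 x = c * e x := by
    intro x
    simp only [gaussianPDFReal, NNReal.coe_one, mul_one, sub_zero, hc, he]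
    rw [neg_div]
  have hderiv : ∀ z, HasDerivAt (fun y => c * (hermiteR n y * e y))
      (-(c * (hermiteR (n + 1) z * e z))) z := fun z => by
    simpa [mul_neg] using (hasDerivAt_hermite_gauss n z).const_mul c
  -- FTC on (t, ∞)
  have key_Ioi : ∫ z in Ioi t, c * (hermiteR (n + 1) z * e z)
      = c * (hermiteR n t * e t) := by
    have h := integral_Ioi_of_hasDerivAt_of_tendsto
      (f := fun z => -(c * (hermiteR n z * e z)))
      (f' := fun z => c * (hermiteR (n + 1) z * e z)) (a := t) (m := 0)
      ((hderiv t).neg.continuousAt.continuousWithinAt)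
      (fun x _ => by simpa [Pi.neg_def] using (hderiv x).neg)
      (((integrable_hermite_gauss (n + 1)).const_mul c).integrableOn)
      (by simpa using ((tendsto_hermite_gauss_atTop n).const_mul c).neg)
    simpa using h
  -- FTC on (-∞, t) via reflection
  have key_Iio : ∫ z in Iio t, c * (hermiteR (n + 1) z * e z)
      = -(c * (hermiteR n t * e t)) := by
    have hrefl : (∫ z in Iio t, c * (hermiteR (n + 1) z * e z))
        = ∫ x in Ioi (-t), c * (hermiteR (n + 1) (-x) * e (-x)) := by
      have h := integral_comp_neg_Ioi (-t) (fun z => c * (hermiteR (n + 1) z * e z))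
      rw [neg_neg] at h
      rw [← integral_Iic_eq_integral_Iio, ← h]
    rw [hrefl]
    have hG : ∀ x : ℝ, HasDerivAt (fun y : ℝ => c * (hermiteR n (-y) * e (-y)))
        (c * (hermiteR (n + 1) (-x) * e (-x))) x := by
      intro x
      have := (hderiv (-x)).comp x (hasDerivAt_neg x)
      simpa [Function.comp_def] using this
    have hint : IntegrableOn (fun x : ℝ => c * (hermiteR (n + 1) (-x) * e (-x))) (Ioi (-t)) := by
      have h := (integrable_hermite_gauss_neg (n + 1)).const_mul c
      refine (h.congr (Filter.Eventually.of_forall fun x => by simp [he])).integrableOn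
    have htend : Tendsto (fun x : ℝ => c * (hermiteR n (-x) * e (-x))) atTop (nhds 0) := by
      have h := (tendsto_hermite_gauss_neg_atTop n).const_mul c
      simpa [he] using h
    have h := integral_Ioi_of_hasDerivAt_of_tendsto
      (f := fun x : ℝ => c * (hermiteR n (-x) * e (-x)))
      (f' := fun x : ℝ => c * (hermiteR (n + 1) (-x) * e (-x))) (a := -t) (m := 0)
      ((hG (-t)).continuousAt.continuousWithinAt)
      (fun x _ => hG x) hint htend
    simpa using h
  -- convert the Gaussian integral to a Lebesgue integral
  have h1 : (∫ z, sgn' (z - t) * hermiteR (n + 1) z ∂gaussianReal 0 1)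
      = ∫ z, sgn' (z - t) * (c * (hermiteR (n + 1) z * e z)) := by
    rw [gaussianReal_of_var_ne_zero 0 one_ne_zero]
    have hd : gaussianPDF 0 1 = fun x => ((Real.toNNReal (gaussianPDFReal 0 1 x) : ℝ≥0) : ℝ≥0∞) :=
      rfl
    rw [hd, integral_withDensity_eq_integral_smul (measurable_gaussianPDFReal 0 1).real_toNNReal]
    congr 1; funext z
    rw [NNReal.smul_def, Real.coe_toNNReal _ (gaussianPDFReal_nonneg 0 1 z), hpdf z,
      smul_eq_mul]
    ring
  set f : ℝ → ℝ := fun z => sgn' (z - t) * (c * (hermiteR (n + 1) z * e z)) with hfdef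
  have hcont : Continuous fun z : ℝ => c * (hermiteR (n + 1) z * e z) := by
    rw [hermiteR_eq]
    exact continuous_const.mul ((Polynomial.continuous _).mul (by continuity))
  have hsgnm : Measurable fun z : ℝ => sgn' (z - t) := by
    unfold sgn'
    exact Measurable.ite (measurableSet_le measurable_const
      ((measurable_id.sub measurable_const))) measurable_const measurable_const
  have hf_int : Integrable f := by
    refine Integrable.mono' ((integrable_hermite_gauss (n + 1)).const_mul c).abs
      ((hsgnm.mul hcont.measurable).aestronglyMeasurable)
      (Filter.Eventually.of_forall fun z => ?_)
    have hs : |sgn' (z - t)| = 1 := by unfold sgn'; split <;> simp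
    rw [hfdef]
    simp only [Real.norm_eq_abs, abs_mul, hs, one_mul]
    exact le_refl _
  rw [h1, ← intervalIntegral.integral_Iio_add_Ici (b := t) hf_int.integrableOn hf_int.integrableOn]
  have hIio : ∫ z in Iio t, f z = ∫ z in Iio t, -(c * (hermiteR (n + 1) z * e z)) := by
    refine setIntegral_congr_fun measurableSet_Iio fun z hz => ?_
    have hz' : ¬ (0 ≤ z - t) := by simp only [Set.mem_Iio] at hz; linarith
    show sgn' (z - t) * (c * (hermiteR (n + 1) z * e z)) = _
    rw [sgn', if_neg hz']
    ring
  have hIci : ∫ z in Ici t, f z = ∫ z in Ioi t, c * (hermiteR (n + 1) z * e z) := by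
    rw [show (∫ z in Ici t, f z) = ∫ z in Ici t, c * (hermiteR (n + 1) z * e z) from
      setIntegral_congr_fun measurableSet_Ici fun z hz => by
        show sgn' (z - t) * (c * (hermiteR (n + 1) z * e z)) = _
        rw [sgn', if_pos (sub_nonneg.2 hz), one_mul], integral_Ici_eq_integral_Ioi]
  rw [hIio, hIci, key_Ioi, integral_neg, key_Iio, neg_neg]
  rw [he, hc]
  rw [show -t ^ 2 / 2 = -(t ^ 2 / 2) by ring]
  field_simp
  ring
end
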